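/- Let $d \in \mathbb{N}$, let $K \subseteq \mathbb{R}^d$ be a compact set with $\mathrm{vol}(K) > 0$, and let $H : \mathbb{R}^d \times \mathbb{R}^d \to \mathbb{C}$ be a smooth function with $\mathrm{supp}\, H \subseteq K \times K$. Let $L_1 = H$, $L_{n+1}(x,y) = \int_K H(x,\xi) L_n(\xi,y)\, \mathrm{d}\xi$, and let $S = \sum_{n=1}^{\infty} \frac{L_n}{n!}$ (the series converging uniformly on compact sets together with all derivatives). Then for every $l \in \mathbb{N}$, all compact sets $K_1, K_2 \subseteq \mathbb{R}^d$ and every compact set $V \subseteq \mathbb{R}^d$ containing $K \cup K_1 \cup K_2$, one has $p_{K_1 \times K_2,\, l}(S) \le \frac{1}{\mathrm{vol}(K)} \left( e^{\mathrm{vol}(K)\, p_{V \times V,\, l}(H)} - 1 \right)$, where $p_{A,l}(f) = \sup_{z \in A, |\alpha| \le l} |\partial^\alpha f(z)|$. -/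

import Mathlib

set_option synthInstance.maxHeartbeats 1000000
set_option maxHeartbeats 1000000

open MeasureTheory Set Filter

noncomputable def dirDeriv {E : Type*} [NormedAddCommGroup E] [NormedSpace ℝ E]
    (v : E) (f : E → ℂ) : E → ℂ := fun x => fderiv ℝ f x v

noncomputable def itDeriv {E : Type*} [NormedAddCommGroup E] [NormedSpace ℝ E] :
    List E → (E → ℂ) → E → ℂ
  | [] => fun f => f
  | v :: vs => fun f => itDeriv vs (dirDeriv v f)

/-- The standard basis directions of the product space `ℝ^m × ℝ^n`. -/
def prodDirs (m n : ℕ) : Set ((Fin m → ℝ) × (Fin n → ℝ)) :=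
  {v | (∃ i, v = (Pi.single i (1:ℝ), 0)) ∨ ∃ j, v = (0, Pi.single j (1:ℝ))}

/-- The standard basis directions of `ℝ^d`. -/
def stdDirs (d : ℕ) : Set (Fin d → ℝ) := {v | ∃ i, v = Pi.single i (1:ℝ)}

/-- The seminorm `p_{A,l}(f)`: the sup over `x ∈ A` and over all partial derivatives
(iterated directional derivatives along basis directions from `B`) of order `≤ l`. -/
noncomputable def pSemi {E : Type*} [NormedAddCommGroup E] [NormedSpace ℝ E]
    (B A : Set E) (l : ℕ) (f : E → ℂ) : ℝ :=
  sSup {r | ∃ vs : List E, vs.length ≤ l ∧ (∀ v ∈ vs, v ∈ B) ∧ ∃ x ∈ A, r = ‖itDeriv vs f x‖}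

/-- The iterated kernels: `iterKer S H n` is the kernel `L_{n+1}` of the paper,
i.e. `L_1 = H` and `L_{n+1}(x,y) = ∫_S H(x,ξ) L_n(ξ,y) dξ` for `n ≥ 1`. -/
noncomputable def iterKer {d : ℕ} (S : Set (Fin d → ℝ))
    (H : (Fin d → ℝ) × (Fin d → ℝ) → ℂ) : ℕ → (Fin d → ℝ) × (Fin d → ℝ) → ℂ
  | 0 => H
  | n + 1 => fun q => ∫ ξ in S, H (q.1, ξ) * iterKer S H n (ξ, q.2)

/-! ### Auxiliary lemmas -/

section Aux

variable {E' : Type*} [NormedAddCommGroup E'] [NormedSpace ℝ E']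

lemma exists_bound_of_compactSupport {X F : Type*} [TopologicalSpace X] [NormedAddCommGroup F]
    {f : X → F} (hf : Continuous f) (h : HasCompactSupport f) :
    ∃ C, 0 ≤ C ∧ ∀ x, ‖f x‖ ≤ C := by
  obtain ⟨C, hC⟩ := hf.bounded_above_of_compact_support h
  exact ⟨max C 0, le_max_right _ _, fun x => (hC x).trans (le_max_left _ _)⟩

lemma contDiff_dirDeriv (v : E') {f : E' → ℂ} (hf : ContDiff ℝ (⊤:ℕ∞) f) :
    ContDiff ℝ (⊤:ℕ∞) (dirDeriv v f) := by
  exact (hf.fderiv_right (by simp)).clm_apply contDiff_const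

lemma support_dirDeriv (v : E') {f : E' → ℂ} {C : Set E'} (hC : IsClosed C)
    (h : Function.support f ⊆ C) : Function.support (dirDeriv v f) ⊆ C := by
  intro x hx
  by_contra hxC
  apply hx
  have hev : f =ᶠ[nhds x] (fun _ => (0:ℂ)) :=
    Filter.eventuallyEq_of_mem (hC.isOpen_compl.mem_nhds hxC)
      (fun y hy => Function.notMem_support.mp (fun hy' => hy (h hy')))
  show fderiv ℝ f x v = 0
  rw [hev.fderiv_eq, fderiv_fun_const]
  rfl

lemma contDiff_itDeriv (vs : List E') {f : E' → ℂ} (hf : ContDiff ℝ (⊤:ℕ∞) f) :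
    ContDiff ℝ (⊤:ℕ∞) (itDeriv vs f) := by
  induction vs generalizing f with
  | nil => exact hf
  | cons v vs ih => exact ih (contDiff_dirDeriv v hf)

lemma support_itDeriv (vs : List E') {f : E' → ℂ} {C : Set E'} (hC : IsClosed C)
    (h : Function.support f ⊆ C) : Function.support (itDeriv vs f) ⊆ C := by
  induction vs generalizing f with
  | nil => exact h
  | cons v vs ih => exact ih (support_dirDeriv v hC h)

lemma itDeriv_const_mul (c : ℂ) : ∀ (vs : List E') (f : E' → ℂ), ContDiff ℝ (⊤:ℕ∞) f →
    itDeriv vs (fun x => c * f x) = fun x => c * itDeriv vs f x := by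
  intro vs
  induction vs with
  | nil => exact fun f _ => rfl
  | cons v vs ih =>
    intro f hf
    have h1 : dirDeriv v (fun x => c * f x) = fun x => c * dirDeriv v f x := by
      funext x
      show fderiv ℝ (fun x => c * f x) x v = _
      rw [fderiv_const_mul (hf.differentiable (by simp) x) c]
      simp [dirDeriv]
    show itDeriv vs (dirDeriv v fun x => c * f x) = _
    rw [h1, ih (dirDeriv v f) (contDiff_dirDeriv v hf)]
    rfl

lemma norm_itDeriv_le : ∀ (vs : List E') (f : E' → ℂ), ContDiff ℝ (⊤:ℕ∞) f →
    (∀ v ∈ vs, ‖v‖ ≤ 1) → ∀ x, ‖itDeriv vs f x‖ ≤ ‖iteratedFDeriv ℝ vs.length f x‖ := by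
  intro vs
  induction vs with
  | nil =>
    intro f hf _ x
    show ‖f x‖ ≤ ‖iteratedFDeriv ℝ 0 f x‖
    rw [norm_iteratedFDeriv_zero]
  | cons v vs ih =>
    intro f hf hnorm x
    have hv1 : ‖v‖ ≤ 1 := hnorm v (List.mem_cons_self)
    have step : ‖iteratedFDeriv ℝ vs.length (dirDeriv v f) x‖
        ≤ ‖iteratedFDeriv ℝ (vs.length + 1) f x‖ := by
      have hdd : dirDeriv v f = (⇑(ContinuousLinearMap.apply ℝ ℂ v)) ∘ (fderiv ℝ f) := rfl
      have hfd : ContDiff ℝ (⊤:ℕ∞) (fderiv ℝ f) := hf.fderiv_right (by simp)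
      rw [hdd, (ContinuousLinearMap.apply ℝ ℂ v).iteratedFDeriv_comp_left (x := x) hfd.contDiffAt
        (by exact_mod_cast le_top)]
      calc ‖(ContinuousLinearMap.apply ℝ ℂ v).compContinuousMultilinearMap
              (iteratedFDeriv ℝ vs.length (fderiv ℝ f) x)‖
          ≤ ‖ContinuousLinearMap.apply ℝ ℂ v‖ * ‖iteratedFDeriv ℝ vs.length (fderiv ℝ f) x‖ :=
            ContinuousLinearMap.norm_compContinuousMultilinearMap_le _ _
        _ ≤ 1 * ‖iteratedFDeriv ℝ vs.length (fderiv ℝ f) x‖ := by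
            apply mul_le_mul_of_nonneg_right _ (norm_nonneg _)
            refine le_trans (ContinuousLinearMap.opNorm_le_bound _ (norm_nonneg v)
              (fun L => by rw [mul_comm]; exact L.le_opNorm v)) hv1
        _ = ‖iteratedFDeriv ℝ (vs.length + 1) f x‖ := by
            rw [one_mul, norm_iteratedFDeriv_fderiv]
    calc ‖itDeriv (v :: vs) f x‖ = ‖itDeriv vs (dirDeriv v f) x‖ := rfl
      _ ≤ ‖iteratedFDeriv ℝ vs.length (dirDeriv v f) x‖ :=
          ih (dirDeriv v f) (contDiff_dirDeriv v hf)
            (fun w hw => hnorm w (List.mem_cons_of_mem _ hw)) x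
      _ ≤ ‖iteratedFDeriv ℝ (v :: vs).length f x‖ := step

lemma norm_prodDirs_le {m n : ℕ} {v : (Fin m → ℝ) × (Fin n → ℝ)} (hv : v ∈ prodDirs m n) :
    ‖v‖ ≤ 1 := by
  have hsingle : ∀ (k : ℕ) (i : Fin k), ‖(Pi.single i (1:ℝ) : Fin k → ℝ)‖ ≤ 1 := by
    intro k i
    refine (pi_norm_le_iff_of_nonneg zero_le_one).2 (fun j => ?_)
    rw [Pi.single_apply]
    split_ifs <;> simp
  rcases hv with ⟨i, rfl⟩ | ⟨j, rfl⟩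
  · rw [Prod.norm_def]
    exact max_le (hsingle _ _) (by simp)
  · rw [Prod.norm_def]
    exact max_le (by simp) (hsingle _ _)

end Aux

/-! ### pSemi basic facts -/

lemma bddAbove_pSemiSet {m n : ℕ} {f : (Fin m → ℝ) × (Fin n → ℝ) → ℂ}
    (hf : ContDiff ℝ (⊤:ℕ∞) f) {A : Set ((Fin m → ℝ) × (Fin n → ℝ))} (hA : IsCompact A) (l : ℕ) :
    BddAbove {r | ∃ vs, vs.length ≤ l ∧ (∀ v ∈ vs, v ∈ prodDirs m n) ∧
      ∃ x ∈ A, r = ‖itDeriv vs f x‖} := by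
  have hCk : ∀ k : ℕ, ∃ C, ∀ x ∈ A, ‖iteratedFDeriv ℝ k f x‖ ≤ C := fun k =>
    hA.exists_bound_of_continuousOn ((hf.continuous_iteratedFDeriv
      (by exact_mod_cast le_top)).continuousOn)
  choose C hC using hCk
  classical
  refine ⟨(Finset.range (l+1)).sup' (by simp) C, ?_⟩
  rintro r ⟨vs, hlen, hdirs, x, hx, rfl⟩
  calc ‖itDeriv vs f x‖ ≤ ‖iteratedFDeriv ℝ vs.length f x‖ :=
        norm_itDeriv_le vs f hf (fun v hv => norm_prodDirs_le (hdirs v hv)) x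
    _ ≤ C vs.length := hC vs.length x hx
    _ ≤ (Finset.range (l+1)).sup' (by simp) C :=
        Finset.le_sup' C (by simp [Nat.lt_succ_iff, hlen])

lemma le_pSemi {m n : ℕ} {f : (Fin m → ℝ) × (Fin n → ℝ) → ℂ}
    (hf : ContDiff ℝ (⊤:ℕ∞) f) {A : Set ((Fin m → ℝ) × (Fin n → ℝ))} (hA : IsCompact A) (l : ℕ)
    {vs : List ((Fin m → ℝ) × (Fin n → ℝ))} (hlen : vs.length ≤ l)
    (hdirs : ∀ v ∈ vs, v ∈ prodDirs m n) {x : (Fin m → ℝ) × (Fin n → ℝ)} (hx : x ∈ A) :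
    ‖itDeriv vs f x‖ ≤ pSemi (prodDirs m n) A l f :=
  le_csSup (bddAbove_pSemiSet hf hA l) ⟨vs, hlen, hdirs, x, hx, rfl⟩

lemma pSemi_nonneg {m n : ℕ} {f : (Fin m → ℝ) × (Fin n → ℝ) → ℂ}
    (hf : ContDiff ℝ (⊤:ℕ∞) f) {A : Set ((Fin m → ℝ) × (Fin n → ℝ))} (hA : IsCompact A) (l : ℕ)
    (hne : A.Nonempty) : 0 ≤ pSemi (prodDirs m n) A l f := by
  obtain ⟨x, hx⟩ := hne
  exact le_trans (norm_nonneg (itDeriv [] f x))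
    (le_pSemi hf hA l (vs := []) (Nat.zero_le l) (fun v hv => absurd hv List.not_mem_nil) hx)

/-! ### Parametric integrals -/

section ParInt

variable {d : ℕ} {S : Set (Fin d → ℝ)}

noncomputable def kerT (S : Set (Fin d → ℝ)) (G₁ G₂ : (Fin d → ℝ) × (Fin d → ℝ) → ℂ) :
    (Fin d → ℝ) × (Fin d → ℝ) → ℂ :=
  fun q => ∫ ξ in S, G₁ (q.1, ξ) * G₂ (ξ, q.2)

def IsKer (S : Set (Fin d → ℝ)) (f : (Fin d → ℝ) × (Fin d → ℝ) → ℂ) : Prop :=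
  ContDiff ℝ (⊤:ℕ∞) f ∧ Function.support f ⊆ S ×ˢ S

abbrev QQ (d : ℕ) := (Fin d → ℝ) × (Fin d → ℝ)

lemma hasFDerivAt_parint {F : Type*}
    [NormedAddCommGroup F] [NormedSpace ℝ F] [CompleteSpace F]
    (hS : IsCompact S) (g : QQ d × (Fin d → ℝ) → F) (hg : ContDiff ℝ (⊤:ℕ∞) g)
    (hcs : HasCompactSupport g) (q₀ : QQ d) :
    HasFDerivAt (fun q => ∫ ξ in S, g (q, ξ))
      (∫ ξ in S, (fderiv ℝ g (q₀, ξ)).comp (ContinuousLinearMap.inl ℝ (QQ d) (Fin d → ℝ))) q₀ := by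
  haveI : IsFiniteMeasure (volume.restrict S) :=
    ⟨by rw [Measure.restrict_apply_univ]; exact hS.measure_lt_top⟩
  obtain ⟨C, hC0, hC⟩ := exists_bound_of_compactSupport (hg.continuous_fderiv (by simp)) (hcs.fderiv ℝ)
  refine hasFDerivAt_integral_of_dominated_of_fderiv_le
    (F := fun q ξ => g (q, ξ))
    (F' := fun q ξ => (fderiv ℝ g (q, ξ)).comp (ContinuousLinearMap.inl ℝ (QQ d) (Fin d → ℝ)))
    (bound := fun _ => C * ‖ContinuousLinearMap.inl ℝ (QQ d) (Fin d → ℝ)‖)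
    (Metric.ball_mem_nhds q₀ one_pos) ?_ ?_ ?_ ?_ ?_ ?_
  · exact Filter.Eventually.of_forall (fun q =>
      (hg.continuous.comp (Continuous.prodMk_right q)).aestronglyMeasurable)
  · exact ((hg.continuous.comp (Continuous.prodMk_right q₀)).continuousOn).integrableOn_compact hS
  · exact (Continuous.clm_comp ((hg.continuous_fderiv (by simp)).comp (Continuous.prodMk_right q₀))
      continuous_const).aestronglyMeasurable
  · refine Filter.Eventually.of_forall (fun ξ => fun q _ => ?_)
    exact le_trans (ContinuousLinearMap.opNorm_comp_le _ _)
      (mul_le_mul_of_nonneg_right (hC _) (norm_nonneg _))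
  · exact integrable_const _
  · refine Filter.Eventually.of_forall (fun ξ => fun q _ => ?_)
    have h1 : HasFDerivAt (fun q : QQ d => (q, ξ)) (ContinuousLinearMap.inl ℝ (QQ d) (Fin d → ℝ)) q :=
      hasFDerivAt_prodMk_left q ξ
    exact ((hg.differentiable (by simp) (q, ξ)).hasFDerivAt.comp q h1)

lemma contDiff_parint (hS : IsCompact S) (n : ℕ) :
    ∀ {F : Type} [NormedAddCommGroup F] [NormedSpace ℝ F] [CompleteSpace F]
    (g : QQ d × (Fin d → ℝ) → F), ContDiff ℝ (⊤:ℕ∞) g → HasCompactSupport g →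
    ContDiff ℝ n (fun q => ∫ ξ in S, g (q, ξ)) := by
  haveI : IsFiniteMeasure (volume.restrict S) :=
    ⟨by rw [Measure.restrict_apply_univ]; exact hS.measure_lt_top⟩
  induction n with
  | zero =>
    intro F _ _ _ g hg hcs
    rw [show ((0:ℕ) : WithTop ℕ∞) = 0 from rfl, contDiff_zero]
    obtain ⟨C, hC0, hC⟩ := exists_bound_of_compactSupport hg.continuous hcs
    refine continuous_of_dominated (bound := fun _ => C) ?_ ?_ (integrable_const _) ?_
    · exact fun q => (hg.continuous.comp (Continuous.prodMk_right q)).aestronglyMeasurable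
    · exact fun q => Filter.Eventually.of_forall (fun ξ => hC _)
    · exact Filter.Eventually.of_forall (fun ξ =>
        hg.continuous.comp (continuous_id.prodMk continuous_const))
  | succ n ih =>
    intro F _ _ _ g hg hcs
    have hcast : ((n+1:ℕ) : WithTop ℕ∞) = (n : WithTop ℕ∞) + 1 := by exact_mod_cast rfl
    rw [hcast, contDiff_succ_iff_fderiv]
    set g' : QQ d × (Fin d → ℝ) → (QQ d →L[ℝ] F) :=
      fun p => (fderiv ℝ g p).comp (ContinuousLinearMap.inl ℝ (QQ d) (Fin d → ℝ)) with hg'def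
    have hg' : ContDiff ℝ (⊤:ℕ∞) g' := (hg.fderiv_right (by simp)).clm_comp contDiff_const
    have hcs' : HasCompactSupport g' := by
      refine (hcs.fderiv ℝ).mono' (fun p hp => subset_closure ?_)
      intro h0
      apply hp
      show (fderiv ℝ g p).comp _ = 0
      rw [h0, ContinuousLinearMap.zero_comp]
    have hfd : (fderiv ℝ fun q => ∫ ξ in S, g (q, ξ)) = fun q => ∫ ξ in S, g' (q, ξ) :=
      funext fun q => (hasFDerivAt_parint hS g hg hcs q).fderiv
    refine ⟨fun q => (hasFDerivAt_parint hS g hg hcs q).differentiableAt, ?_, ?_⟩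
    · intro h; exact absurd h (by simp)
    · rw [hfd]
      exact ih g' hg' hcs'


lemma prodker_smooth {d : ℕ} {G₁ G₂ : (Fin d → ℝ) × (Fin d → ℝ) → ℂ}
    (h₁ : ContDiff ℝ (⊤:ℕ∞) G₁) (h₂ : ContDiff ℝ (⊤:ℕ∞) G₂) :
    ContDiff ℝ (⊤:ℕ∞) (fun p : QQ d × (Fin d → ℝ) => G₁ (p.1.1, p.2) * G₂ (p.2, p.1.2)) :=
  (h₁.comp ((contDiff_fst.fst).prodMk contDiff_snd)).mul
    (h₂.comp (contDiff_snd.prodMk (contDiff_fst.snd)))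

lemma prodker_cs {d : ℕ} {S : Set (Fin d → ℝ)} (hS : IsCompact S)
    {G₁ G₂ : (Fin d → ℝ) × (Fin d → ℝ) → ℂ} (h₁ : IsKer S G₁) (h₂ : IsKer S G₂) :
    HasCompactSupport (fun p : QQ d × (Fin d → ℝ) => G₁ (p.1.1, p.2) * G₂ (p.2, p.1.2)) := by
  refine HasCompactSupport.intro ((hS.prod hS).prod hS) (fun p hp => ?_)
  by_cases h11 : p.1.1 ∈ S
  · by_cases h12 : p.1.2 ∈ S
    · by_cases h2 : p.2 ∈ S
      · exact absurd (Set.mem_prod.2 ⟨Set.mem_prod.2 ⟨h11, h12⟩, h2⟩) hp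
      · rw [Function.notMem_support.mp
          (show (p.1.1, p.2) ∉ Function.support G₁ from fun hs => h2 (h₁.2 hs).2), zero_mul]
    · rw [Function.notMem_support.mp
        (show (p.2, p.1.2) ∉ Function.support G₂ from fun hs => h12 (h₂.2 hs).2), mul_zero]
  · rw [Function.notMem_support.mp
      (show (p.1.1, p.2) ∉ Function.support G₁ from fun hs => h11 (h₁.2 hs).1), zero_mul]

lemma fderiv_prodker_apply {d : ℕ} {G₁ G₂ : (Fin d → ℝ) × (Fin d → ℝ) → ℂ}
    (h₁ : ContDiff ℝ (⊤:ℕ∞) G₁) (h₂ : ContDiff ℝ (⊤:ℕ∞) G₂)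
    (p w : QQ d × (Fin d → ℝ)) :
    fderiv ℝ (fun p : QQ d × (Fin d → ℝ) => G₁ (p.1.1, p.2) * G₂ (p.2, p.1.2)) p w
      = G₁ (p.1.1, p.2) * fderiv ℝ G₂ (p.2, p.1.2) (w.2, w.1.2)
        + G₂ (p.2, p.1.2) * fderiv ℝ G₁ (p.1.1, p.2) (w.1.1, w.2) := by
  have hφ : HasFDerivAt (fun p : QQ d × (Fin d → ℝ) => (p.1.1, p.2))
      (((ContinuousLinearMap.fst ℝ (Fin d → ℝ) (Fin d → ℝ)).comp
        (ContinuousLinearMap.fst ℝ (QQ d) (Fin d → ℝ))).prod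
        (ContinuousLinearMap.snd ℝ (QQ d) (Fin d → ℝ))) p :=
    (hasFDerivAt_fst.fst).prodMk hasFDerivAt_snd
  have hψ : HasFDerivAt (fun p : QQ d × (Fin d → ℝ) => (p.2, p.1.2))
      ((ContinuousLinearMap.snd ℝ (QQ d) (Fin d → ℝ)).prod
        ((ContinuousLinearMap.snd ℝ (Fin d → ℝ) (Fin d → ℝ)).comp
          (ContinuousLinearMap.fst ℝ (QQ d) (Fin d → ℝ)))) p :=
    hasFDerivAt_snd.prodMk (hasFDerivAt_fst.snd)
  have hA : HasFDerivAt (fun p : QQ d × (Fin d → ℝ) => G₁ (p.1.1, p.2))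
      ((fderiv ℝ G₁ (p.1.1, p.2)).comp
        (((ContinuousLinearMap.fst ℝ (Fin d → ℝ) (Fin d → ℝ)).comp
          (ContinuousLinearMap.fst ℝ (QQ d) (Fin d → ℝ))).prod
          (ContinuousLinearMap.snd ℝ (QQ d) (Fin d → ℝ)))) p :=
    HasFDerivAt.comp p ((h₁.differentiable (by simp) (p.1.1, p.2)).hasFDerivAt) hφ
  have hB : HasFDerivAt (fun p : QQ d × (Fin d → ℝ) => G₂ (p.2, p.1.2))
      ((fderiv ℝ G₂ (p.2, p.1.2)).comp
        ((ContinuousLinearMap.snd ℝ (QQ d) (Fin d → ℝ)).prod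
          ((ContinuousLinearMap.snd ℝ (Fin d → ℝ) (Fin d → ℝ)).comp
            (ContinuousLinearMap.fst ℝ (QQ d) (Fin d → ℝ))))) p :=
    HasFDerivAt.comp p ((h₂.differentiable (by simp) (p.2, p.1.2)).hasFDerivAt) hψ
  rw [(show HasFDerivAt (fun p : QQ d × (Fin d → ℝ) => G₁ (p.1.1, p.2) * G₂ (p.2, p.1.2)) _ p from hA.mul hB).fderiv]
  simp [ContinuousLinearMap.add_apply, ContinuousLinearMap.smul_apply,
    ContinuousLinearMap.comp_apply, ContinuousLinearMap.prod_apply, smul_eq_mul]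

lemma isKer_kerT (hS : IsCompact S) {G₁ G₂ : (Fin d → ℝ) × (Fin d → ℝ) → ℂ}
    (h₁ : IsKer S G₁) (h₂ : IsKer S G₂) : IsKer S (kerT S G₁ G₂) := by
  have hgsm : ContDiff ℝ (⊤:ℕ∞) (fun p : QQ d × (Fin d → ℝ) => G₁ (p.1.1, p.2) * G₂ (p.2, p.1.2)) :=
    (h₁.1.comp ((contDiff_fst.fst).prodMk contDiff_snd)).mul
      (h₂.1.comp (contDiff_snd.prodMk (contDiff_fst.snd)))
  have hgcs : HasCompactSupport (fun p : QQ d × (Fin d → ℝ) => G₁ (p.1.1, p.2) * G₂ (p.2, p.1.2)) := by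
    refine HasCompactSupport.intro ((hS.prod hS).prod hS) (fun p hp => ?_)
    by_cases h11 : p.1.1 ∈ S
    · by_cases h12 : p.1.2 ∈ S
      · by_cases h2 : p.2 ∈ S
        · exact absurd (Set.mem_prod.2 ⟨Set.mem_prod.2 ⟨h11, h12⟩, h2⟩) hp
        · have : G₁ (p.1.1, p.2) = 0 := Function.notMem_support.mp
            (fun hs => h2 (h₁.2 hs).2)
          rw [this, zero_mul]
      · have : G₂ (p.2, p.1.2) = 0 := Function.notMem_support.mp
          (fun hs => h12 (h₂.2 hs).2)
        rw [this, mul_zero]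
    · have : G₁ (p.1.1, p.2) = 0 := Function.notMem_support.mp
        (fun hs => h11 (h₁.2 hs).1)
      rw [this, zero_mul]
  constructor
  · exact contDiff_infty.2 (fun n => contDiff_parint hS n _ hgsm hgcs)
  · intro q hq
    by_contra hqS
    apply hq
    have h0 : ∀ ξ, G₁ (q.1, ξ) * G₂ (ξ, q.2) = 0 := by
      intro ξ
      rcases not_and_or.mp (fun hq' : q.1 ∈ S ∧ q.2 ∈ S =>
        hqS (Set.mem_prod.2 hq')) with h | h
      · rw [Function.notMem_support.mp
          (show (q.1, ξ) ∉ Function.support G₁ from fun hs => h (h₁.2 hs).1), zero_mul]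
      · rw [Function.notMem_support.mp
          (show (ξ, q.2) ∉ Function.support G₂ from fun hs => h (h₂.2 hs).2), mul_zero]
    show (∫ ξ in S, G₁ (q.1, ξ) * G₂ (ξ, q.2)) = 0
    simp only [h0, integral_zero]

lemma dirDeriv_kerT_left (hS : IsCompact S) {G₁ G₂ : (Fin d → ℝ) × (Fin d → ℝ) → ℂ}
    (h₁ : IsKer S G₁) (h₂ : IsKer S G₂) (e : Fin d → ℝ) :
    dirDeriv ((e, 0) : (Fin d → ℝ) × (Fin d → ℝ)) (kerT S G₁ G₂) =
      kerT S (dirDeriv ((e, 0) : (Fin d → ℝ) × (Fin d → ℝ)) G₁) G₂ := by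
  funext q
  have hfd := hasFDerivAt_parint hS
    (fun p : QQ d × (Fin d → ℝ) => G₁ (p.1.1, p.2) * G₂ (p.2, p.1.2))
    (prodker_smooth h₁.1 h₂.1) (prodker_cs hS h₁ h₂) q
  have hInt : Integrable (fun ξ =>
      (fderiv ℝ (fun p : QQ d × (Fin d → ℝ) => G₁ (p.1.1, p.2) * G₂ (p.2, p.1.2)) (q, ξ)).comp
        (ContinuousLinearMap.inl ℝ (QQ d) (Fin d → ℝ))) (volume.restrict S) :=
    ((Continuous.clm_comp (((prodker_smooth h₁.1 h₂.1).continuous_fderiv (by simp)).comp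
      (Continuous.prodMk_right q)) continuous_const).continuousOn).integrableOn_compact hS
  show fderiv ℝ (kerT S G₁ G₂) q ((e, 0) : QQ d) = _
  rw [show kerT S G₁ G₂ = (fun q => ∫ ξ in S,
      (fun p : QQ d × (Fin d → ℝ) => G₁ (p.1.1, p.2) * G₂ (p.2, p.1.2)) (q, ξ)) from rfl,
    hfd.fderiv, ContinuousLinearMap.integral_apply hInt]
  show _ = ∫ ξ in S, dirDeriv ((e, 0) : QQ d) G₁ (q.1, ξ) * G₂ (ξ, q.2)
  refine integral_congr_ae (Filter.Eventually.of_forall (fun ξ => ?_))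
  show ((fderiv ℝ (fun p : QQ d × (Fin d → ℝ) => G₁ (p.1.1, p.2) * G₂ (p.2, p.1.2)) (q, ξ)).comp
    (ContinuousLinearMap.inl ℝ (QQ d) (Fin d → ℝ))) ((e, 0) : QQ d) = _
  rw [ContinuousLinearMap.comp_apply, ContinuousLinearMap.inl_apply,
    fderiv_prodker_apply h₁.1 h₂.1]
  show G₁ (q.1, ξ) * fderiv ℝ G₂ (ξ, q.2) ((0:Fin d → ℝ), (0:Fin d → ℝ))
      + G₂ (ξ, q.2) * fderiv ℝ G₁ (q.1, ξ) (e, (0:Fin d → ℝ)) = _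
  rw [Prod.mk_zero_zero, map_zero, mul_zero, zero_add]
  exact mul_comm _ _

lemma dirDeriv_kerT_right (hS : IsCompact S) {G₁ G₂ : (Fin d → ℝ) × (Fin d → ℝ) → ℂ}
    (h₁ : IsKer S G₁) (h₂ : IsKer S G₂) (e : Fin d → ℝ) :
    dirDeriv ((0, e) : (Fin d → ℝ) × (Fin d → ℝ)) (kerT S G₁ G₂) =
      kerT S G₁ (dirDeriv ((0, e) : (Fin d → ℝ) × (Fin d → ℝ)) G₂) := by
  funext q
  have hfd := hasFDerivAt_parint hS
    (fun p : QQ d × (Fin d → ℝ) => G₁ (p.1.1, p.2) * G₂ (p.2, p.1.2))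
    (prodker_smooth h₁.1 h₂.1) (prodker_cs hS h₁ h₂) q
  have hInt : Integrable (fun ξ =>
      (fderiv ℝ (fun p : QQ d × (Fin d → ℝ) => G₁ (p.1.1, p.2) * G₂ (p.2, p.1.2)) (q, ξ)).comp
        (ContinuousLinearMap.inl ℝ (QQ d) (Fin d → ℝ))) (volume.restrict S) :=
    ((Continuous.clm_comp (((prodker_smooth h₁.1 h₂.1).continuous_fderiv (by simp)).comp
      (Continuous.prodMk_right q)) continuous_const).continuousOn).integrableOn_compact hS
  show fderiv ℝ (kerT S G₁ G₂) q ((0, e) : QQ d) = _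
  rw [show kerT S G₁ G₂ = (fun q => ∫ ξ in S,
      (fun p : QQ d × (Fin d → ℝ) => G₁ (p.1.1, p.2) * G₂ (p.2, p.1.2)) (q, ξ)) from rfl,
    hfd.fderiv, ContinuousLinearMap.integral_apply hInt]
  show _ = ∫ ξ in S, G₁ (q.1, ξ) * dirDeriv ((0, e) : QQ d) G₂ (ξ, q.2)
  refine integral_congr_ae (Filter.Eventually.of_forall (fun ξ => ?_))
  show ((fderiv ℝ (fun p : QQ d × (Fin d → ℝ) => G₁ (p.1.1, p.2) * G₂ (p.2, p.1.2)) (q, ξ)).comp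
    (ContinuousLinearMap.inl ℝ (QQ d) (Fin d → ℝ))) ((0, e) : QQ d) = _
  rw [ContinuousLinearMap.comp_apply, ContinuousLinearMap.inl_apply,
    fderiv_prodker_apply h₁.1 h₂.1]
  show G₁ (q.1, ξ) * fderiv ℝ G₂ (ξ, q.2) ((0:Fin d → ℝ), e)
      + G₂ (ξ, q.2) * fderiv ℝ G₁ (q.1, ξ) ((0:Fin d → ℝ), (0:Fin d → ℝ)) = _
  rw [Prod.mk_zero_zero, map_zero, mul_zero, add_zero]
  rfl

lemma isKer_dirDeriv (hS : IsCompact S) {f : (Fin d → ℝ) × (Fin d → ℝ) → ℂ}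
    (hf : IsKer S f) (v : (Fin d → ℝ) × (Fin d → ℝ)) : IsKer S (dirDeriv v f) :=
  ⟨contDiff_dirDeriv v hf.1, support_dirDeriv v ((hS.prod hS).isClosed) hf.2⟩

lemma isKer_itDeriv (hS : IsCompact S) {f : (Fin d → ℝ) × (Fin d → ℝ) → ℂ}
    (hf : IsKer S f) (vs : List ((Fin d → ℝ) × (Fin d → ℝ))) : IsKer S (itDeriv vs f) :=
  ⟨contDiff_itDeriv vs hf.1, support_itDeriv vs ((hS.prod hS).isClosed) hf.2⟩

lemma itDeriv_kerT (hS : IsCompact S) :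
    ∀ (vs : List ((Fin d → ℝ) × (Fin d → ℝ))), (∀ v ∈ vs, v ∈ prodDirs d d) →
    ∀ (G₁ G₂ : (Fin d → ℝ) × (Fin d → ℝ) → ℂ), IsKer S G₁ → IsKer S G₂ →
    ∃ us ws, us.length + ws.length = vs.length ∧ (∀ v ∈ us, v ∈ prodDirs d d) ∧
      (∀ v ∈ ws, v ∈ prodDirs d d) ∧
      itDeriv vs (kerT S G₁ G₂) = kerT S (itDeriv us G₁) (itDeriv ws G₂) := by
  intro vs
  induction vs with
  | nil => exact fun _ G₁ G₂ _ _ => ⟨[], [], rfl, by simp, by simp, rfl⟩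
  | cons v vs ih =>
    intro hdirs G₁ G₂ h₁ h₂
    rcases hdirs v (List.mem_cons_self) with ⟨i, rfl⟩ | ⟨j, rfl⟩
    · have hst : itDeriv (((Pi.single i 1 : Fin d → ℝ), (0 : Fin d → ℝ)) :: vs) (kerT S G₁ G₂)
          = itDeriv vs (kerT S (dirDeriv ((Pi.single i 1 : Fin d → ℝ), (0 : Fin d → ℝ)) G₁) G₂) := by
        show itDeriv vs _ = _
        rw [dirDeriv_kerT_left hS h₁ h₂]
      obtain ⟨us, ws, hlen, hus, hws, heq⟩ := ih (fun v hv => hdirs v (List.mem_cons_of_mem _ hv))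
        _ G₂ (isKer_dirDeriv hS h₁ _) h₂
      exact ⟨((Pi.single i 1 : Fin d → ℝ), (0 : Fin d → ℝ)) :: us, ws,
        by simp only [List.length_cons]; omega,
        by intro w hw; rcases List.mem_cons.mp hw with rfl | hw
           · exact Or.inl ⟨i, rfl⟩
           · exact hus w hw,
        hws, by rw [hst, heq]; rfl⟩
    · have hst : itDeriv (((0 : Fin d → ℝ), (Pi.single j 1 : Fin d → ℝ)) :: vs) (kerT S G₁ G₂)
          = itDeriv vs (kerT S G₁ (dirDeriv ((0 : Fin d → ℝ), (Pi.single j 1 : Fin d → ℝ)) G₂)) := by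
        show itDeriv vs _ = _
        rw [dirDeriv_kerT_right hS h₁ h₂]
      obtain ⟨us, ws, hlen, hus, hws, heq⟩ := ih (fun v hv => hdirs v (List.mem_cons_of_mem _ hv))
        G₁ _ h₁ (isKer_dirDeriv hS h₂ _)
      exact ⟨us, ((0 : Fin d → ℝ), (Pi.single j 1 : Fin d → ℝ)) :: ws,
        by simp only [List.length_cons]; omega,
        hus,
        by intro w hw; rcases List.mem_cons.mp hw with rfl | hw
           · exact Or.inr ⟨j, rfl⟩
           · exact hws w hw,
        by rw [hst, heq]; rfl⟩

lemma kerT_norm_le (hS : IsCompact S) {G₁ G₂ : (Fin d → ℝ) × (Fin d → ℝ) → ℂ}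
    (h₁ : IsKer S G₁) (h₂ : IsKer S G₂) {C₁ C₂ : ℝ} (hC₁ : ∀ x, ‖G₁ x‖ ≤ C₁)
    (hC₂ : ∀ x, ‖G₂ x‖ ≤ C₂) (hC₁0 : 0 ≤ C₁) (q : (Fin d → ℝ) × (Fin d → ℝ)) :
    ‖kerT S G₁ G₂ q‖ ≤ (volume S).toReal * (C₁ * C₂) := by
  haveI : IsFiniteMeasure (volume.restrict S) :=
    ⟨by rw [Measure.restrict_apply_univ]; exact hS.measure_lt_top⟩
  have : ‖kerT S G₁ G₂ q‖ ≤ (C₁ * C₂) * ((volume.restrict S) Set.univ).toReal := by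
    refine norm_integral_le_of_norm_le_const (Filter.Eventually.of_forall (fun ξ => ?_))
    rw [norm_mul]
    exact mul_le_mul (hC₁ _) (hC₂ _) (norm_nonneg _) hC₁0
  rw [Measure.restrict_apply_univ] at this
  linarith [this]

end ParInt



lemma fderiv_norm_le_sum_dirs {d : ℕ} (f : (Fin d → ℝ) × (Fin d → ℝ) → ℂ)
    (hf : Differentiable ℝ f) (x : (Fin d → ℝ) × (Fin d → ℝ)) :
    ‖fderiv ℝ f x‖ ≤ (∑ i : Fin d, ‖dirDeriv ((Pi.single i 1 : Fin d → ℝ), (0:Fin d → ℝ)) f x‖)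
      + ∑ j : Fin d, ‖dirDeriv ((0:Fin d → ℝ), (Pi.single j 1 : Fin d → ℝ)) f x‖ := by
  refine ContinuousLinearMap.opNorm_le_bound _ ?_ ?_
  · positivity
  · intro w
    have hw1 : w.1 = ∑ i : Fin d, w.1 i • (Pi.single i 1 : Fin d → ℝ) := by
      funext k
      simp [Finset.sum_apply, Pi.single_apply, mul_ite]
    have hw2 : w.2 = ∑ j : Fin d, w.2 j • (Pi.single j 1 : Fin d → ℝ) := by
      funext k
      simp [Finset.sum_apply, Pi.single_apply, mul_ite]
    have hw : w = (∑ i : Fin d, w.1 i • (((Pi.single i 1 : Fin d → ℝ), (0:Fin d → ℝ)) :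
          (Fin d → ℝ) × (Fin d → ℝ)))
        + ∑ j : Fin d, w.2 j • ((((0:Fin d → ℝ), (Pi.single j 1 : Fin d → ℝ))) :
          (Fin d → ℝ) × (Fin d → ℝ)) := by
      apply Prod.ext
      · simp only [Prod.fst_add, Prod.fst_sum, Prod.smul_mk, smul_zero,
          Finset.sum_const_zero, add_zero]
        exact hw1
      · simp only [Prod.snd_add, Prod.snd_sum, Prod.smul_mk, smul_zero,
          Finset.sum_const_zero, zero_add]
        exact hw2
    calc ‖fderiv ℝ f x w‖
        = ‖(∑ i : Fin d, w.1 i • fderiv ℝ f x ((Pi.single i 1 : Fin d → ℝ), (0:Fin d → ℝ)))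
            + ∑ j : Fin d, w.2 j • fderiv ℝ f x ((0:Fin d → ℝ), (Pi.single j 1 : Fin d → ℝ))‖ := by
          conv_lhs => rw [hw]
          rw [map_add, map_sum, map_sum]
          simp only [_root_.map_smul]
      _ ≤ ‖∑ i : Fin d, w.1 i • fderiv ℝ f x ((Pi.single i 1 : Fin d → ℝ), (0:Fin d → ℝ))‖
            + ‖∑ j : Fin d, w.2 j • fderiv ℝ f x ((0:Fin d → ℝ), (Pi.single j 1 : Fin d → ℝ))‖ :=
          norm_add_le _ _
      _ ≤ (∑ i : Fin d, ‖w.1 i • fderiv ℝ f x ((Pi.single i 1 : Fin d → ℝ), (0:Fin d → ℝ))‖)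
            + ∑ j : Fin d, ‖w.2 j • fderiv ℝ f x ((0:Fin d → ℝ), (Pi.single j 1 : Fin d → ℝ))‖ :=
          add_le_add (norm_sum_le _ _) (norm_sum_le _ _)
      _ ≤ (∑ i : Fin d, ‖dirDeriv ((Pi.single i 1 : Fin d → ℝ), (0:Fin d → ℝ)) f x‖ * ‖w‖)
            + ∑ j : Fin d, ‖dirDeriv ((0:Fin d → ℝ), (Pi.single j 1 : Fin d → ℝ)) f x‖ * ‖w‖ := by
          apply add_le_add <;>
          · refine Finset.sum_le_sum (fun i _ => ?_)
            rw [norm_smul, mul_comm]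
            refine mul_le_mul_of_nonneg_left ?_ (norm_nonneg _)
            first
            | exact le_trans (norm_le_pi_norm w.1 i) (norm_fst_le w)
            | exact le_trans (norm_le_pi_norm w.2 i) (norm_snd_le w)
      _ = ((∑ i : Fin d, ‖dirDeriv ((Pi.single i 1 : Fin d → ℝ), (0:Fin d → ℝ)) f x‖)
            + ∑ j : Fin d, ‖dirDeriv ((0:Fin d → ℝ), (Pi.single j 1 : Fin d → ℝ)) f x‖) * ‖w‖ := by
          rw [← Finset.sum_mul, ← Finset.sum_mul, add_mul]

lemma itDeriv_tsum_exchange {d : ℕ} (b : ℕ → ℝ) (hb : Summable b) :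
    ∀ (vs : List ((Fin d → ℝ) × (Fin d → ℝ))), (∀ v ∈ vs, v ∈ prodDirs d d) →
    ∀ (G : ℕ → ((Fin d → ℝ) × (Fin d → ℝ)) → ℂ),
    (∀ n, ContDiff ℝ (⊤:ℕ∞) (G n)) →
    (∀ n (us : List ((Fin d → ℝ) × (Fin d → ℝ))), us.length ≤ vs.length →
      (∀ v ∈ us, v ∈ prodDirs d d) → ∀ x, ‖itDeriv us (G n) x‖ ≤ b n) →
    itDeriv vs (fun q => ∑' n, G n q) = fun q => ∑' n, itDeriv vs (G n) q := by
  intro vs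
  induction vs with
  | nil => intro _ G _ _; rfl
  | cons v vs ih =>
    intro hdirs G hsm hbd
    have hu : Summable (fun n => (2*(d:ℝ)) * b n) := hb.mul_left _
    have hdiff : ∀ n, Differentiable ℝ (G n) := fun n => (hsm n).differentiable (by simp)
    have hfb : ∀ n x, ‖fderiv ℝ (G n) x‖ ≤ (2*(d:ℝ)) * b n := by
      intro n x
      refine le_trans (fderiv_norm_le_sum_dirs (G n) (hdiff n) x) ?_
      have h1 : ∀ i : Fin d,
          ‖dirDeriv ((Pi.single i 1 : Fin d → ℝ), (0:Fin d → ℝ)) (G n) x‖ ≤ b n := fun i =>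
        hbd n [((Pi.single i 1 : Fin d → ℝ), (0:Fin d → ℝ))]
          (by simp) (by intro u hu'; rcases List.mem_singleton.mp hu' with rfl; exact Or.inl ⟨i, rfl⟩) x
      have h2 : ∀ j : Fin d,
          ‖dirDeriv ((0:Fin d → ℝ), (Pi.single j 1 : Fin d → ℝ)) (G n) x‖ ≤ b n := fun j =>
        hbd n [((0:Fin d → ℝ), (Pi.single j 1 : Fin d → ℝ))]
          (by simp) (by intro u hu'; rcases List.mem_singleton.mp hu' with rfl; exact Or.inr ⟨j, rfl⟩) x
      have hb0 : 0 ≤ b n := le_trans (norm_nonneg _) (hbd n [] (by simp) (by simp) 0)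
      calc (∑ i : Fin d, ‖dirDeriv ((Pi.single i 1 : Fin d → ℝ), (0:Fin d → ℝ)) (G n) x‖)
            + ∑ j : Fin d, ‖dirDeriv ((0:Fin d → ℝ), (Pi.single j 1 : Fin d → ℝ)) (G n) x‖
          ≤ (∑ _i : Fin d, b n) + ∑ _j : Fin d, b n :=
            add_le_add (Finset.sum_le_sum (fun i _ => h1 i)) (Finset.sum_le_sum (fun j _ => h2 j))
        _ = (2*(d:ℝ)) * b n := by
            simp [Finset.sum_const, nsmul_eq_mul]
            ring
    have hsum0 : ∀ x, Summable (fun n => G n x) := fun x =>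
      Summable.of_norm_bounded hb (fun n => hbd n [] (by simp) (by simp) x)
    have hsumf : ∀ x, Summable (fun n => fderiv ℝ (G n) x) := fun x =>
      Summable.of_norm_bounded hu (fun n => hfb n x)
    have hder : ∀ x, HasFDerivAt (fun y => ∑' n, G n y) (∑' n, fderiv ℝ (G n) x) x :=
      fun x => hasFDerivAt_tsum hu (fun n x => (hdiff n x).hasFDerivAt) hfb (hsum0 0) x
    have hdd : dirDeriv v (fun q => ∑' n, G n q) = fun x => ∑' n, dirDeriv v (G n) x := by
      funext x
      show fderiv ℝ (fun y => ∑' n, G n y) x v = _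
      rw [(hder x).fderiv]
      exact ContinuousLinearMap.map_tsum (ContinuousLinearMap.apply ℝ ℂ v) (hsumf x)
    show itDeriv vs (dirDeriv v (fun q => ∑' n, G n q)) = _
    rw [hdd, ih (fun u hu' => hdirs u (List.mem_cons_of_mem _ hu'))
      (fun n => fun x => dirDeriv v (G n) x)
      (fun n => contDiff_dirDeriv v (hsm n))
      (fun n us hlen hus x => hbd n (v :: us) (Nat.succ_le_succ hlen)
        (by intro u hu'; rcases List.mem_cons.mp hu' with rfl | hu''
            · exact hdirs _ (List.mem_cons_self)
            · exact hus u hu'') x)]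
    rfl

lemma summable_shiftfac (x : ℝ) : Summable (fun n : ℕ => x ^ (n+1) / (n+1).factorial) :=
  (Real.summable_pow_div_factorial x).comp_injective Nat.succ_injective

lemma bSeq_eq (vol M : ℝ) (hvol : 0 < vol) (n : ℕ) :
    vol ^ n * M ^ (n+1) / (n+1).factorial = vol⁻¹ * ((vol*M) ^ (n+1) / (n+1).factorial) := by
  rw [mul_pow, pow_succ]
  have h0 : (((n+1).factorial : ℝ)) ≠ 0 := by positivity
  field_simp
  ring

lemma summable_bSeq (vol M : ℝ) (hvol : 0 < vol) :
    Summable (fun n : ℕ => vol ^ n * M ^ (n+1) / (n+1).factorial) := by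
  have : (fun n : ℕ => vol ^ n * M ^ (n+1) / (n+1).factorial)
      = fun n => vol⁻¹ * ((vol*M) ^ (n+1) / (n+1).factorial) := funext (bSeq_eq vol M hvol)
  rw [this]
  exact (summable_shiftfac (vol*M)).mul_left _

lemma exp_eq_tsum_real (x : ℝ) : Real.exp x = ∑' n : ℕ, x ^ n / n.factorial := by
  rw [Real.exp_eq_exp_ℝ, NormedSpace.exp_eq_tsum ℝ]
  simp [smul_eq_mul, div_eq_inv_mul]

lemma tsum_bSeq (vol M : ℝ) (hvol : 0 < vol) :
    ∑' n : ℕ, vol ^ n * M ^ (n+1) / (n+1).factorial = vol⁻¹ * (Real.exp (vol * M) - 1) := by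
  have h1 : (fun n : ℕ => vol ^ n * M ^ (n+1) / (n+1).factorial)
      = fun n => vol⁻¹ * ((vol*M) ^ (n+1) / (n+1).factorial) := funext (bSeq_eq vol M hvol)
  rw [h1, tsum_mul_left]
  congr 1
  have h2 := Summable.tsum_eq_zero_add (Real.summable_pow_div_factorial (vol*M))
  rw [exp_eq_tsum_real (vol*M)]
  rw [h2]
  simp


/-- Seminorm estimate for the exponential kernel `S = ∑_{n≥1} L_n/n!`:
`p_{K₁×K₂,l}(S) ≤ (1/vol(K)) (e^{vol(K) p_{V×V,l}(H)} - 1)`. -/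
theorem exponential_kernel_seminorm_estimate
    {d : ℕ} (S : Set (Fin d → ℝ)) (hS : IsCompact S) (hvol : 0 < (volume S).toReal)
    (H : (Fin d → ℝ) × (Fin d → ℝ) → ℂ) (hH : ContDiff ℝ (⊤:ℕ∞) H)
    (hsupp : Function.support H ⊆ S ×ˢ S)
    (Sfun : (Fin d → ℝ) × (Fin d → ℝ) → ℂ)
    (hSfun : ∀ q, Sfun q = ∑' n : ℕ, (((n+1).factorial : ℂ))⁻¹ * iterKer S H n q) :
    ∀ l : ℕ, ∀ K₁ K₂ V : Set (Fin d → ℝ),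
      IsCompact K₁ → IsCompact K₂ → IsCompact V → S ∪ K₁ ∪ K₂ ⊆ V →
      pSemi (prodDirs d d) (K₁ ×ˢ K₂) l Sfun ≤
        ((volume S).toReal)⁻¹ *
          (Real.exp ((volume S).toReal * pSemi (prodDirs d d) (V ×ˢ V) l H) - 1) := by
  intro l K₁ K₂ V hK₁ hK₂ hV hsub
  classical
  set vol := (volume S).toReal with hvoldef
  set M := pSemi (prodDirs d d) (V ×ˢ V) l H with hMdef
  have hHK : IsKer S H := ⟨hH, hsupp⟩
  have hSne : S.Nonempty := by
    by_contra h
    rw [Set.not_nonempty_iff_eq_empty] at h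
    rw [hvoldef, h] at hvol
    simp at hvol
  obtain ⟨x₀, hx₀S⟩ := hSne
  have hx₀V : x₀ ∈ V := hsub (Or.inl (Or.inl hx₀S))
  have hM0 : 0 ≤ M :=
    pSemi_nonneg hH (hV.prod hV) l ⟨(x₀, x₀), Set.mem_prod.2 ⟨hx₀V, hx₀V⟩⟩
  have hHbd : ∀ us : List ((Fin d → ℝ) × (Fin d → ℝ)), us.length ≤ l →
      (∀ v ∈ us, v ∈ prodDirs d d) → ∀ x, ‖itDeriv us H x‖ ≤ M := by
    intro us hlen hus x
    by_cases hx : x ∈ S ×ˢ S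
    · have hxV : x ∈ V ×ˢ V := Set.mem_prod.2
        ⟨hsub (Or.inl (Or.inl (Set.mem_prod.1 hx).1)),
         hsub (Or.inl (Or.inl (Set.mem_prod.1 hx).2))⟩
      exact le_pSemi hH (hV.prod hV) l hlen hus hxV
    · have h0 : itDeriv us H x = 0 := Function.notMem_support.mp
        (fun hsup => hx ((isKer_itDeriv hS hHK us).2 hsup))
      rw [h0, norm_zero]
      exact hM0
  have hIter : ∀ n : ℕ, IsKer S (iterKer S H n) ∧
      ∀ us : List ((Fin d → ℝ) × (Fin d → ℝ)), us.length ≤ l →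
        (∀ v ∈ us, v ∈ prodDirs d d) → ∀ x,
        ‖itDeriv us (iterKer S H n) x‖ ≤ vol ^ n * M ^ (n+1) := by
    intro n
    induction n with
    | zero =>
      exact ⟨hHK, fun us h1 h2 x => by simpa [iterKer] using hHbd us h1 h2 x⟩
    | succ n ihn =>
      have hker : IsKer S (iterKer S H (n+1)) := isKer_kerT hS hHK ihn.1
      refine ⟨hker, ?_⟩
      intro us hlen hus x
      obtain ⟨as, bs, hab, has, hbs, heq⟩ :=
        itDeriv_kerT hS us hus H (iterKer S H n) hHK ihn.1
      rw [show itDeriv us (iterKer S H (n+1)) = itDeriv us (kerT S H (iterKer S H n)) from rfl,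
        heq]
      have h1 := hHbd as (le_trans (by omega) hlen) has
      have h2 := ihn.2 bs (le_trans (by omega) hlen) hbs
      calc ‖kerT S (itDeriv as H) (itDeriv bs (iterKer S H n)) x‖
          ≤ vol * (M * (vol ^ n * M ^ (n+1))) :=
            kerT_norm_le hS (isKer_itDeriv hS hHK as) (isKer_itDeriv hS ihn.1 bs) h1 h2 hM0 x
        _ = vol ^ (n+1) * M ^ (n+1+1) := by ring
  set G : ℕ → ((Fin d → ℝ) × (Fin d → ℝ)) → ℂ :=
    fun n q => (((n+1).factorial : ℂ))⁻¹ * iterKer S H n q with hGdef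
  have hSfun' : Sfun = fun q => ∑' n, G n q := funext hSfun
  set b : ℕ → ℝ := fun n => vol ^ n * M ^ (n+1) / (n+1).factorial with hbdef
  have hbsum : Summable b := summable_bSeq vol M hvol
  have hGsm : ∀ n, ContDiff ℝ (⊤:ℕ∞) (G n) := fun n => contDiff_const.mul (hIter n).1.1
  have hGbd : ∀ n (us : List ((Fin d → ℝ) × (Fin d → ℝ))), us.length ≤ l →
      (∀ v ∈ us, v ∈ prodDirs d d) → ∀ x, ‖itDeriv us (G n) x‖ ≤ b n := by
    intro n us hlen hus x
    rw [show G n = (fun q => (((n+1).factorial : ℂ))⁻¹ * iterKer S H n q) from rfl,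
      itDeriv_const_mul _ us _ (hIter n).1.1]
    show ‖(((n+1).factorial : ℂ))⁻¹ * itDeriv us (iterKer S H n) x‖ ≤ b n
    rw [norm_mul, norm_inv]
    have hnc : ‖(((n+1).factorial : ℕ) : ℂ)‖ = (((n+1).factorial : ℕ) : ℝ) := by
      rw [Complex.norm_natCast]
    rw [hnc]
    calc (((n+1).factorial : ℕ) : ℝ)⁻¹ * ‖itDeriv us (iterKer S H n) x‖
        ≤ (((n+1).factorial : ℕ) : ℝ)⁻¹ * (vol ^ n * M ^ (n+1)) := by
          refine mul_le_mul_of_nonneg_left ((hIter n).2 us hlen hus x) (by positivity)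
      _ = b n := by
          show _ = vol ^ n * M ^ (n+1) / (((n+1).factorial : ℕ) : ℝ)
          rw [div_eq_inv_mul]
  have hRHS0 : 0 ≤ vol⁻¹ * (Real.exp (vol * M) - 1) := by
    have h1 : (1:ℝ) ≤ Real.exp (vol * M) := by
      have := Real.add_one_le_exp (vol * M)
      nlinarith [mul_nonneg hvol.le hM0]
    have h2 : (0:ℝ) ≤ vol⁻¹ := inv_nonneg.2 hvol.le
    nlinarith
  rw [hSfun']
  show pSemi (prodDirs d d) (K₁ ×ˢ K₂) l (fun q => ∑' n, G n q) ≤ _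
  unfold pSemi
  refine Real.sSup_le ?_ hRHS0
  rintro r ⟨vs, hlen, hdirs, x, hx, rfl⟩
  rw [itDeriv_tsum_exchange b hbsum vs hdirs G hGsm
    (fun n us hlen' hus x => hGbd n us (le_trans hlen' hlen) hus x)]
  calc ‖∑' n, itDeriv vs (G n) x‖ ≤ ∑' n, b n :=
        tsum_of_norm_bounded hbsum.hasSum (fun n => hGbd n vs hlen hdirs x)
    _ = vol⁻¹ * (Real.exp (vol * M) - 1) := tsum_bSeq vol M hvol
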